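/- arXiv:1511.07230 — 2 statements merged into one kernel-verified Lean document; each statement's English description precedes it below -/
import Mathlib

section
/- Under the same hypotheses and definitions as in the previous identity (F Lipschitz convex, φ± monotone with γ(0+)=0, γ(∞)=∞, A± defined as above), the functions A₊ and A₋ are uniformly bounded on ℝ≥0, with ‖A±‖_∞ ≤ 3‖F'‖_∞. -/
/-!
Write `k = (1/φ₊ - 1/φ₋)/2 ≥ 0`, so that `γ = ∫₀ k`, and `B z = ∫_{(z,∞)} e^{-γ} dF'`.
Both weights `1/φ₊` and `1/|φ₋|` are at most `2k`, and `e^γ` is absolutely continuous with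
derivative `e^γ k`, so `∫₀^t e^γ/|φ±| ≤ 2 (e^{γ t} - 1)`. Exchanging the order of integration,
`∫₀^l e^γ/|φ±| · B ≤ ∫_{(0,∞)} e^{-γ m} · 2 (e^{γ (min l m)} - 1) dF'(m) ≤ 2 (F'((0,∞)) - B 0)`,
and `F'((0,∞)) ≤ ‖F'‖_∞ - F' 0`. Hence `A₊ l ∈ [F' 0, 2‖F'‖_∞ - F' 0]` and
`A₋ l ∈ [F' 0 - 2‖F'‖_∞, -F' 0]`.
-/

open MeasureTheory Set Filter

theorem LipschitzOnWith.comp_absolutelyContinuousOnInterval {f φ : ℝ → ℝ} {K : NNReal}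
    {s : Set ℝ} {a b : ℝ} (hφ : LipschitzOnWith K φ s) (hf : AbsolutelyContinuousOnInterval f a b)
    (hfs : MapsTo f (uIcc a b) s) : AbsolutelyContinuousOnInterval (φ ∘ f) a b := by
  unfold AbsolutelyContinuousOnInterval at *
  refine squeeze_zero' (Eventually.of_forall fun _ => Finset.sum_nonneg fun _ _ => dist_nonneg)
    ?_ (by simpa using hf.const_mul (K : ℝ))
  filter_upwards [mem_inf_of_right (mem_principal_self _)] with E hE
  rw [Finset.mul_sum]
  exact Finset.sum_le_sum fun i hi =>
    hφ.dist_le_mul _ (hfs (hE.1 i hi).1) _ (hfs (hE.1 i hi).2)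

theorem integral_exp_primitive_mul {k : ℝ → ℝ} {a b : ℝ} (hk : IntervalIntegrable k volume a b) :
    ∫ x in a..b, Real.exp (∫ y in a..x, k y) * k x = Real.exp (∫ y in a..b, k y) - 1 := by
  set G := fun x => ∫ y in a..x, k y
  have hG : AbsolutelyContinuousOnInterval G a b :=
    hk.absolutelyContinuousOnInterval_intervalIntegral left_mem_uIcc
  obtain ⟨C, hC⟩ := hG.exists_bound
  obtain ⟨K, hK⟩ := ((Real.contDiff_exp (n := 1)).contDiffOn (s := Icc (-C) C)).exists_lipschitzOnWith
    one_ne_zero (convex_Icc _ _) isCompact_Icc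
  have hFTC := (hK.comp_absolutelyContinuousOnInterval hG fun x hx =>
    abs_le.1 (hC x hx)).integral_deriv_eq_sub
  simp only [Function.comp_apply, G, intervalIntegral.integral_same, Real.exp_zero] at hFTC
  rw [← hFTC]
  refine intervalIntegral.integral_congr_ae ?_
  filter_upwards [hk.ae_hasDerivAt_integral] with x hx hxab
  exact (((Real.hasDerivAt_exp _).comp x (hx (uIoc_subset_uIcc hxab) a left_mem_uIcc)).deriv).symm

theorem ofReal_integral_le_lintegral_ofReal {α : Type*} [MeasurableSpace α] {μ : Measure α}
    {f : α → ℝ} (hf : 0 ≤ᵐ[μ] f) :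
    ENNReal.ofReal (∫ x, f x ∂μ) ≤ ∫⁻ x, ENNReal.ofReal (f x) ∂μ :=
  calc ENNReal.ofReal (∫ x, f x ∂μ) ≤ ‖∫ x, f x ∂μ‖ₑ := by
        rw [Real.enorm_eq_ofReal_abs]; exact ENNReal.ofReal_le_ofReal (le_abs_self _)
    _ ≤ ∫⁻ x, ‖f x‖ₑ ∂μ := enorm_integral_le_lintegral_enorm f
    _ = ∫⁻ x, ENNReal.ofReal (f x) ∂μ :=
        lintegral_congr_ae (hf.mono fun x hx => Real.enorm_of_nonneg hx)

theorem lintegral_mul_setLIntegral_Ioi_comm {μ ν : Measure ℝ} [SFinite μ] [SFinite ν]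
    {f E : ℝ → ENNReal} (hf : AEMeasurable f ν) (hE : Measurable E) :
    ∫⁻ z, f z * ∫⁻ m in Ioi z, E m ∂μ ∂ν = ∫⁻ m, E m * ∫⁻ z in Iio m, f z ∂ν ∂μ := by
  set S := {p : ℝ × ℝ | p.1 < p.2}
  have hS : ∀ z m, S.indicator (fun p => f p.1 * E p.2) (z, m) = f z * (Ioi z).indicator E m
      ∧ S.indicator (fun p => f p.1 * E p.2) (z, m) = E m * (Iio m).indicator f z := by
    intro z m
    by_cases hzm : z < m <;> simp [S, hzm, mul_comm]
  calc ∫⁻ z, f z * ∫⁻ m in Ioi z, E m ∂μ ∂ν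
      = ∫⁻ z, ∫⁻ m, S.indicator (fun p => f p.1 * E p.2) (z, m) ∂μ ∂ν := by
        simp_rw [fun z m => (hS z m).1, lintegral_const_mul _ (hE.indicator measurableSet_Ioi),
          lintegral_indicator measurableSet_Ioi]
    _ = ∫⁻ m, ∫⁻ z, S.indicator (fun p => f p.1 * E p.2) (z, m) ∂ν ∂μ :=
        lintegral_lintegral_swap ((hf.comp_fst.mul (hE.comp measurable_snd).aemeasurable).indicator
          (measurableSet_lt measurable_fst measurable_snd))
    _ = ∫⁻ m, E m * ∫⁻ z in Iio m, f z ∂ν ∂μ := by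
        simp_rw [fun z m => (hS z m).2, lintegral_const_mul'' _ (hf.indicator measurableSet_Iio),
          lintegral_indicator measurableSet_Iio]

theorem StieltjesFunction.measure_Ioi_le (f : StieltjesFunction ℝ) {a M : ℝ}
    (hM : ∀ x, a ≤ x → f x ≤ M) : f.measure (Ioi a) ≤ ENNReal.ofReal (M - f a) := by
  have hle : ∀ x, f x ≤ M := fun x => (f.mono (le_max_left x a)).trans (hM _ (le_max_right x a))
  rw [f.measure_Ioi (tendsto_atTop_ciSup f.mono ⟨M, forall_mem_range.2 hle⟩)]
  exact ENNReal.ofReal_le_ofReal (sub_le_sub_right (ciSup_le hle) _)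

theorem AntitoneOn.integrableOn_Ioc_of_integrableOn {g : ℝ → ℝ} {a : ℝ}
    (hg : AntitoneOn g (Ioi 0)) (ha : 0 < a) (hint : IntegrableOn g (Ioc 0 a)) (b : ℝ) :
    IntegrableOn g (Ioc 0 b) := by
  rcases le_total b a with hba | hab
  · exact hint.mono_set (Ioc_subset_Ioc_right hba)
  · rw [← Ioc_union_Ioc_eq_Ioc ha.le hab]
    exact hint.union ((hg.mono fun x hx => ha.trans_le hx.1).integrableOn_isCompact
      isCompact_Icc |>.mono_set Ioc_subset_Icc_self)

theorem AntitoneOn.locallyIntegrable_indicator_Ioi {g : ℝ → ℝ} {a : ℝ}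
    (hg : AntitoneOn g (Ioi 0)) (ha : 0 < a) (hint : IntegrableOn g (Ioc 0 a)) :
    LocallyIntegrable ((Ioi 0).indicator g) := fun x =>
  ⟨Iic (x + 1), Iic_mem_nhds (lt_add_one x), by
    rw [integrableOn_indicator_iff measurableSet_Ioi, Ioi_inter_Iic]
    exact hg.integrableOn_Ioc_of_integrableOn ha hint _⟩

section Primitive

variable {k : ℝ → ℝ}

theorem MeasureTheory.LocallyIntegrable.intervalIntegrable (hk : LocallyIntegrable k) (a b : ℝ) :
    IntervalIntegrable k volume a b :=
  (hk.integrableOn_isCompact isCompact_uIcc).intervalIntegrable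

theorem monotone_primitive_of_nonneg (hk : LocallyIntegrable k) (hk0 : 0 ≤ k) :
    Monotone fun x => ∫ y in 0..x, k y := fun x x' hxx' => by
  have := intervalIntegral.integral_interval_sub_left (hk.intervalIntegrable 0 x')
    (hk.intervalIntegrable 0 x)
  linarith [intervalIntegral.integral_nonneg (μ := volume) hxx' fun y _ => hk0 y]

theorem exp_neg_primitive_le_one (hk0 : 0 ≤ k) {m : ℝ} (hm : 0 ≤ m) :
    Real.exp (-∫ y in 0..m, k y) ≤ 1 :=
  Real.exp_le_one_iff.2 (neg_nonpos.2 (intervalIntegral.integral_nonneg hm fun y _ => hk0 y))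

theorem integrableOn_exp_neg_primitive {μ : Measure ℝ} (hμ : μ (Ioi 0) ≠ ⊤)
    (hk : LocallyIntegrable k) (hk0 : 0 ≤ k) {z : ℝ} (hz : 0 ≤ z) :
    IntegrableOn (fun m => Real.exp (-∫ y in 0..m, k y)) (Ioi z) μ :=
  Measure.integrableOn_of_bounded (M := 1)
    (ne_top_of_le_ne_top hμ (measure_mono (Ioi_subset_Ioi hz)))
    (Real.measurable_exp.comp (monotone_primitive_of_nonneg hk hk0).measurable.neg).aestronglyMeasurable
    (by filter_upwards [ae_restrict_mem measurableSet_Ioi] with m hm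
        rw [Real.norm_of_nonneg (Real.exp_pos _).le]
        exact exp_neg_primitive_le_one hk0 (hz.trans hm.le))

theorem setLIntegral_exp_primitive_mul_le {h : ℝ → ℝ} {c t : ℝ} (hk : LocallyIntegrable k)
    (hk0 : 0 ≤ k) (hhk : ∀ z ∈ Ioi 0, h z ≤ c * k z) (hc : 0 ≤ c) (ht : 0 ≤ t) :
    ∫⁻ z in Ioc 0 t, ENNReal.ofReal (Real.exp (∫ y in 0..z, k y) * h z)
      ≤ ENNReal.ofReal (c * (Real.exp (∫ y in 0..t, k y) - 1)) := by
  have hint : IntegrableOn (fun z => c * (Real.exp (∫ y in 0..z, k y) * k z)) (Ioc 0 t) :=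
    (((hk.integrableOn_isCompact isCompact_Icc).continuousOn_mul
      (Real.continuous_exp.comp (intervalIntegral.continuous_primitive
        hk.intervalIntegrable 0)).continuousOn isCompact_Icc).mono_set
          Ioc_subset_Icc_self).const_mul c
  calc ∫⁻ z in Ioc 0 t, ENNReal.ofReal (Real.exp (∫ y in 0..z, k y) * h z)
      ≤ ∫⁻ z in Ioc 0 t, ENNReal.ofReal (c * (Real.exp (∫ y in 0..z, k y) * k z)) :=
        setLIntegral_mono' measurableSet_Ioc fun z hz => ENNReal.ofReal_le_ofReal <| by
          rw [mul_left_comm]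
          exact mul_le_mul_of_nonneg_left (hhk z hz.1) (Real.exp_pos _).le
    _ = ENNReal.ofReal (c * (Real.exp (∫ y in 0..t, k y) - 1)) := by
        rw [← ofReal_integral_eq_lintegral_ofReal hint, integral_const_mul,
          ← intervalIntegral.integral_of_le ht,
          integral_exp_primitive_mul (hk.intervalIntegrable 0 t)]
        exact Eventually.of_forall fun z => mul_nonneg hc (mul_nonneg (Real.exp_pos _).le (hk0 z))

theorem exp_neg_primitive_mul_setLIntegral_Iio_le {h : ℝ → ℝ} {c l : ℝ}
    (hk : LocallyIntegrable k) (hk0 : 0 ≤ k) (hhk : ∀ z ∈ Ioi 0, h z ≤ c * k z) (hc : 0 ≤ c)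
    (hl : 0 ≤ l) (m : ℝ) :
    ENNReal.ofReal (Real.exp (-∫ y in 0..m, k y)) *
        ∫⁻ z in Iio m, ENNReal.ofReal (Real.exp (∫ y in 0..z, k y) * h z) ∂volume.restrict (Ioc 0 l)
      ≤ (Ioi 0).indicator (fun m => ENNReal.ofReal (c * (1 - Real.exp (-∫ y in 0..m, k y)))) m := by
  rw [Measure.restrict_restrict measurableSet_Iio]
  rcases le_or_gt m 0 with hm | hm
  · simp [show Iio m ∩ Ioc 0 l = ∅ from eq_empty_of_forall_notMem fun z hz => by
      linarith [hz.1.out, hz.2.1]]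
  set t := min l m
  have hGt : ∫ y in 0..t, k y ≤ ∫ y in 0..m, k y :=
    monotone_primitive_of_nonneg hk hk0 (min_le_right l m)
  rw [indicator_of_mem (show m ∈ Ioi 0 from hm)]
  calc ENNReal.ofReal (Real.exp (-∫ y in 0..m, k y)) *
        ∫⁻ z in Iio m ∩ Ioc 0 l, ENNReal.ofReal (Real.exp (∫ y in 0..z, k y) * h z)
      ≤ ENNReal.ofReal (Real.exp (-∫ y in 0..m, k y)) *
        ∫⁻ z in Ioc 0 t, ENNReal.ofReal (Real.exp (∫ y in 0..z, k y) * h z) := by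
        gcongr
        exact fun z ⟨hzm, hz0, hzl⟩ => ⟨hz0, le_min hzl (le_of_lt hzm)⟩
    _ ≤ ENNReal.ofReal (Real.exp (-∫ y in 0..m, k y)) *
        ENNReal.ofReal (c * (Real.exp (∫ y in 0..t, k y) - 1)) := by
        gcongr
        exact setLIntegral_exp_primitive_mul_le hk hk0 hhk hc (le_min hl hm.le)
    _ ≤ ENNReal.ofReal (c * (1 - Real.exp (-∫ y in 0..m, k y))) := by
        rw [← ENNReal.ofReal_mul (Real.exp_pos _).le]
        refine ENNReal.ofReal_le_ofReal ?_
        have : Real.exp (-∫ y in 0..m, k y) * Real.exp (∫ y in 0..t, k y) ≤ 1 := by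
          rw [← Real.exp_add]; exact Real.exp_le_one_iff.2 (by linarith)
        nlinarith

theorem lintegral_exp_primitive_mul_tail_le {μ : Measure ℝ} [SFinite μ] {h : ℝ → ℝ} {c l : ℝ}
    (hk : LocallyIntegrable k) (hk0 : 0 ≤ k) (hhk : ∀ z ∈ Ioi 0, h z ≤ c * k z)
    (hh : AEMeasurable h (volume.restrict (Ioi 0))) (hc : 0 ≤ c) (hl : 0 ≤ l) :
    ∫⁻ z in Ioc 0 l, ENNReal.ofReal (Real.exp (∫ y in 0..z, k y) * h z) *
        ∫⁻ m in Ioi z, ENNReal.ofReal (Real.exp (-∫ y in 0..m, k y)) ∂μ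
      ≤ ∫⁻ m in Ioi 0, ENNReal.ofReal (c * (1 - Real.exp (-∫ y in 0..m, k y))) ∂μ := by
  have hG := (monotone_primitive_of_nonneg hk hk0).measurable
  rw [lintegral_mul_setLIntegral_Ioi_comm
      (f := fun z => ENNReal.ofReal (Real.exp (∫ y in 0..z, k y) * h z))
      (E := fun m => ENNReal.ofReal (Real.exp (-∫ y in 0..m, k y)))
      (ENNReal.measurable_ofReal.comp_aemeasurable
      ((Real.measurable_exp.comp hG).aemeasurable.mul
        (hh.mono_measure (Measure.restrict_mono Ioc_subset_Ioi_self le_rfl))))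
      (ENNReal.measurable_ofReal.comp (Real.measurable_exp.comp hG.neg)),
    ← lintegral_indicator measurableSet_Ioi]
  exact lintegral_mono (exp_neg_primitive_mul_setLIntegral_Iio_le hk hk0 hhk hc hl)

theorem integral_exp_primitive_mul_tail_le {μ : Measure ℝ} [SFinite μ] (hμ : μ (Ioi 0) ≠ ⊤)
    {h : ℝ → ℝ} {c l : ℝ} (hk : LocallyIntegrable k) (hk0 : 0 ≤ k)
    (hh0 : ∀ z ∈ Ioi 0, 0 ≤ h z) (hhk : ∀ z ∈ Ioi 0, h z ≤ c * k z)
    (hh : AEMeasurable h (volume.restrict (Ioi 0))) (hc : 0 ≤ c) (hl : 0 ≤ l) :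
    ∫ z in 0..l, Real.exp (∫ y in 0..z, k y) * h z * ∫ m in Ioi z, Real.exp (-∫ y in 0..m, k y) ∂μ
      ≤ c * (μ.real (Ioi 0) - ∫ m in Ioi 0, Real.exp (-∫ y in 0..m, k y) ∂μ) := by
  set G := fun x => ∫ y in 0..x, k y
  have hw : ∀ z ∈ Ioi (0 : ℝ), 0 ≤ Real.exp (G z) * h z := fun z hz =>
    mul_nonneg (Real.exp_pos _).le (hh0 z hz)
  have hbound_nonneg : ∀ m ∈ Ioi (0 : ℝ), 0 ≤ c * (1 - Real.exp (-G m)) := fun m hm =>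
    mul_nonneg hc (sub_nonneg.2 (exp_neg_primitive_le_one hk0 (le_of_lt hm)))
  have hint := integrableOn_exp_neg_primitive hμ hk hk0 le_rfl
  have hbound : ∫ m in Ioi 0, c * (1 - Real.exp (-G m)) ∂μ
      = c * (μ.real (Ioi 0) - ∫ m in Ioi 0, Real.exp (-G m) ∂μ) := by
    rw [integral_const_mul, integral_sub (integrableOn_const (C := (1 : ℝ)) hμ) hint,
      setIntegral_const, smul_eq_mul, mul_one]
  show ∫ z in 0..l, Real.exp (G z) * h z * ∫ m in Ioi z, Real.exp (-G m) ∂μ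
    ≤ c * (μ.real (Ioi 0) - ∫ m in Ioi 0, Real.exp (-G m) ∂μ)
  rw [intervalIntegral.integral_of_le hl, ← hbound,
    ← ENNReal.ofReal_le_ofReal_iff (setIntegral_nonneg measurableSet_Ioi hbound_nonneg)]
  calc ENNReal.ofReal (∫ z in Ioc 0 l, Real.exp (G z) * h z * ∫ m in Ioi z, Real.exp (-G m) ∂μ)
      ≤ ∫⁻ z in Ioc 0 l, ENNReal.ofReal (Real.exp (G z) * h z * ∫ m in Ioi z, Real.exp (-G m) ∂μ) :=
        ofReal_integral_le_lintegral_ofReal <| by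
          filter_upwards [ae_restrict_mem measurableSet_Ioc] with z hz
          exact mul_nonneg (hw z hz.1)
            (setIntegral_nonneg measurableSet_Ioi fun _ _ => (Real.exp_pos _).le)
    _ = ∫⁻ z in Ioc 0 l, ENNReal.ofReal (Real.exp (G z) * h z) *
          ∫⁻ m in Ioi z, ENNReal.ofReal (Real.exp (-G m)) ∂μ := by
        refine setLIntegral_congr_fun measurableSet_Ioc fun z hz => ?_
        rw [ENNReal.ofReal_mul (hw z hz.1), ofReal_integral_eq_lintegral_ofReal
          (integrableOn_exp_neg_primitive hμ hk hk0 hz.1.le)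
          (Eventually.of_forall fun _ => (Real.exp_pos _).le)]
    _ ≤ ∫⁻ m in Ioi 0, ENNReal.ofReal (c * (1 - Real.exp (-G m))) ∂μ :=
        lintegral_exp_primitive_mul_tail_le hk hk0 hhk hh hc hl
    _ = ENNReal.ofReal (∫ m in Ioi 0, c * (1 - Real.exp (-G m)) ∂μ) :=
        (ofReal_integral_eq_lintegral_ofReal
          (((integrableOn_const (C := (1 : ℝ)) hμ).sub hint).const_mul c)
          (ae_restrict_of_forall_mem measurableSet_Ioi hbound_nonneg)).symm

theorem integral_exp_div_mul_tail_mem_Icc {μ : Measure ℝ} [SFinite μ] (hμ : μ (Ioi 0) ≠ ⊤)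
    {γ φ : ℝ → ℝ} {c l : ℝ} (hk : LocallyIntegrable k) (hk0 : 0 ≤ k)
    (hγ : ∀ m ∈ Ioi 0, γ m = ∫ y in 0..m, k y) (hφ : ∀ z ∈ Ioi 0, 0 < φ z)
    (hφ_mono : MonotoneOn φ (Ioi 0)) (hφk : ∀ z ∈ Ioi 0, 1 / φ z ≤ c * k z) (hc : 0 ≤ c)
    (hl : 0 ≤ l) :
    ∫ z in 0..l, Real.exp (γ z) / φ z * ∫ m in Ioi z, Real.exp (-γ m) ∂μ
      ∈ Icc 0 (c * (μ.real (Ioi 0) - ∫ m in Ioi 0, Real.exp (-γ m) ∂μ)) := by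
  have htail : ∀ z, 0 ≤ z → ∫ m in Ioi z, Real.exp (-γ m) ∂μ
      = ∫ m in Ioi z, Real.exp (-∫ y in 0..m, k y) ∂μ := fun z hz =>
    setIntegral_congr_fun measurableSet_Ioi fun m hm => by rw [hγ m (hz.trans_lt hm)]
  have hγk : ∫ z in 0..l, Real.exp (γ z) / φ z * ∫ m in Ioi z, Real.exp (-γ m) ∂μ
      = ∫ z in 0..l, Real.exp (∫ y in 0..z, k y) * (1 / φ z) *
          ∫ m in Ioi z, Real.exp (-∫ y in 0..m, k y) ∂μ := by
    refine intervalIntegral.integral_congr_ae (Eventually.of_forall fun z hz => ?_)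
    rw [uIoc_of_le hl] at hz
    rw [hγ z hz.1, htail z hz.1.le, mul_one_div]
  have hφ_anti : AntitoneOn (fun z => 1 / φ z) (Ioi 0) := fun a ha b hb hab =>
    one_div_le_one_div_of_le (hφ a ha) (hφ_mono ha hb hab)
  refine ⟨?_, ?_⟩
  · rw [intervalIntegral.integral_of_le hl]
    exact setIntegral_nonneg measurableSet_Ioc fun z hz =>
      mul_nonneg (div_nonneg (Real.exp_pos _).le (hφ z hz.1).le)
        (setIntegral_nonneg measurableSet_Ioi fun _ _ => (Real.exp_pos _).le)
  · rw [hγk, htail 0 le_rfl]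
    exact integral_exp_primitive_mul_tail_le hμ hk hk0 (fun z hz => (one_div_pos.2 (hφ z hz)).le)
      hφk (aemeasurable_restrict_of_antitoneOn measurableSet_Ioi hφ_anti) hc hl

end Primitive

/-- The density `γ'` of the paper's `γ`, extended by `0` to `(-∞, 0]`. -/
noncomputable def gammaDensity (φp φm : ℝ → ℝ) : ℝ → ℝ :=
  (Ioi 0).indicator fun m => (1 / φp m - 1 / φm m) / 2

section GammaDensity

variable {φp φm : ℝ → ℝ}

theorem one_div_le_two_mul_gammaDensity (hφm_neg : ∀ l : ℝ, 0 < l → φm l < 0) {m : ℝ}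
    (hm : m ∈ Ioi 0) : 1 / φp m ≤ 2 * gammaDensity φp φm m := by
  rw [gammaDensity, indicator_of_mem hm]
  linarith [one_div_neg.2 (hφm_neg m hm)]

theorem one_div_neg_le_two_mul_gammaDensity (hφp_pos : ∀ l : ℝ, 0 < l → 0 < φp l) {m : ℝ}
    (hm : m ∈ Ioi 0) : 1 / -φm m ≤ 2 * gammaDensity φp φm m := by
  rw [gammaDensity, indicator_of_mem hm, one_div_neg_eq_neg_one_div]
  linarith [one_div_pos.2 (hφp_pos m hm)]

theorem gammaDensity_nonneg (hφp_pos : ∀ l : ℝ, 0 < l → 0 < φp l)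
    (hφm_neg : ∀ l : ℝ, 0 < l → φm l < 0) : 0 ≤ gammaDensity φp φm := fun m =>
  indicator_nonneg (fun m hm => by
    linarith [one_div_pos.2 (hφp_pos m hm), one_div_neg.2 (hφm_neg m hm)]) m

theorem integral_gammaDensity {m : ℝ} (hm : 0 < m) :
    ∫ y in 0..m, gammaDensity φp φm y = 1 / 2 * ∫ y in 0..m, (1 / φp y - 1 / φm y) := by
  have : ∫ y in 0..m, gammaDensity φp φm y = ∫ y in 0..m, (1 / φp y - 1 / φm y) / 2 :=
    intervalIntegral.integral_congr_ae
      (Eventually.of_forall fun y hy => indicator_of_mem (uIoc_of_le hm.le ▸ hy).1 _)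
  rw [this, intervalIntegral.integral_div]
  ring

theorem locallyIntegrable_gammaDensity (hφp_pos : ∀ l : ℝ, 0 < l → 0 < φp l)
    (hφm_neg : ∀ l : ℝ, 0 < l → φm l < 0) (hφp_mono : MonotoneOn φp (Ioi 0))
    (hφm_anti : AntitoneOn φm (Ioi 0)) {a : ℝ} (ha : 0 < a)
    (hint : IntervalIntegrable (fun m => 1 / φp m - 1 / φm m) volume 0 a) :
    LocallyIntegrable (gammaDensity φp φm) := by
  refine AntitoneOn.locallyIntegrable_indicator_Ioi (fun x hx y hy hxy => ?_) ha
    (((intervalIntegrable_iff_integrableOn_Ioc_of_le ha.le).1 hint).div_const 2)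
  linarith [one_div_le_one_div_of_le (hφp_pos x hx) (hφp_mono hx hy hxy),
    one_div_le_one_div_of_neg_of_le (hφm_neg x hx) (hφm_anti hx hy hxy)]

end GammaDensity

theorem stmt2_general (F' : StieltjesFunction ℝ)
    (M : ℝ) (hM : ∀ l : ℝ, 0 ≤ l → |F' l| ≤ M)
    (φp φm : ℝ → ℝ)
    (hφp_pos : ∀ l : ℝ, 0 < l → 0 < φp l)
    (hφm_neg : ∀ l : ℝ, 0 < l → φm l < 0)
    (hφp_mono : MonotoneOn φp (Set.Ioi 0))
    (hφm_anti : AntitoneOn φm (Set.Ioi 0))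
    (γ : ℝ → ℝ)
    (hγ : ∀ l : ℝ, 0 < l → γ l = (1/2) * ∫ m in (0:ℝ)..l, (1 / φp m - 1 / φm m))
    (hγtop : Tendsto γ atTop atTop)
    (Ap Am : ℝ → ℝ)
    (hAp0 : Ap 0 = F' 0 + ∫ m in Set.Ioi (0:ℝ), Real.exp (-γ m) ∂F'.measure)
    (hAm0 : Am 0 = -(F' 0) - ∫ m in Set.Ioi (0:ℝ), Real.exp (-γ m) ∂F'.measure)
    (hAp : ∀ l : ℝ, 0 ≤ l → Ap l = Ap 0 + ∫ z in (0:ℝ)..l,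
        (Real.exp (γ z) / φp z) * (∫ m in Set.Ioi z, Real.exp (-γ m) ∂F'.measure))
    (hAm : ∀ l : ℝ, 0 ≤ l → Am l = Am 0 + ∫ z in (0:ℝ)..l,
        (Real.exp (γ z) / φm z) * (∫ m in Set.Ioi z, Real.exp (-γ m) ∂F'.measure)) :
    ∀ l : ℝ, 0 ≤ l → |Ap l| ≤ 3 * M ∧ |Am l| ≤ 3 * M := by
  intro l hl
  have hF'0 := abs_le.1 (hM 0 le_rfl)
  have hμ_le := F'.measure_Ioi_le fun x hx => (le_abs_self _).trans (hM x hx)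
  have hμ : F'.measure.real (Ioi 0) ≤ M - F' 0 :=
    ENNReal.toReal_le_of_le_ofReal (by linarith) hμ_le
  have hμ_ne_top := ne_top_of_le_ne_top ENNReal.ofReal_ne_top hμ_le
  have hγk : ∀ m ∈ Ioi 0, γ m = ∫ y in 0..m, gammaDensity φp φm y := fun m hm => by
    rw [hγ m hm, integral_gammaDensity hm]
  obtain ⟨a, hγa, ha⟩ := ((hγtop.eventually (eventually_gt_atTop 0)).and
    (eventually_gt_atTop 0)).exists
  have hk := locallyIntegrable_gammaDensity hφp_pos hφm_neg hφp_mono hφm_anti ha <| by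
    by_contra hint
    rw [hγ a ha, intervalIntegral.integral_undef hint, mul_zero] at hγa
    exact hγa.false
  have hk0 := gammaDensity_nonneg hφp_pos hφm_neg
  obtain ⟨hTp0, hTp⟩ := integral_exp_div_mul_tail_mem_Icc hμ_ne_top hk hk0 hγk hφp_pos hφp_mono
    (fun z hz => one_div_le_two_mul_gammaDensity hφm_neg hz) zero_le_two hl
  obtain ⟨hTm0, hTm⟩ := integral_exp_div_mul_tail_mem_Icc hμ_ne_top hk hk0 hγk
    (φ := fun z => -φm z) (fun z hz => neg_pos.2 (hφm_neg z hz)) hφm_anti.neg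
    (fun z hz => one_div_neg_le_two_mul_gammaDensity hφp_pos hz) zero_le_two hl
  simp only [div_neg, neg_mul, intervalIntegral.integral_neg] at hTm0 hTm
  have hB0 : 0 ≤ ∫ m in Ioi 0, Real.exp (-γ m) ∂F'.measure :=
    setIntegral_nonneg measurableSet_Ioi fun _ _ => (Real.exp_pos _).le
  rw [hAp l hl, hAm l hl, hAp0, hAm0, abs_le, abs_le]
  refine ⟨⟨?_, ?_⟩, ?_, ?_⟩ <;> linarith

/-- The functions `A₊, A₋` are uniformly bounded by `3‖F'‖_∞`. -/
theorem stmt2 (F : ℝ → ℝ) (F' : StieltjesFunction ℝ)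
    (K : NNReal) (hLip : LipschitzWith K F)
    (hconv : ConvexOn ℝ (Set.Ici 0) F)
    (hF' : ∀ x : ℝ, 0 ≤ x → HasDerivWithinAt F (F' x) (Set.Ioi x) x)
    (M : ℝ) (hM : ∀ l : ℝ, 0 ≤ l → |F' l| ≤ M)
    (φp φm : ℝ → ℝ)
    (hφp_pos : ∀ l : ℝ, 0 < l → 0 < φp l)
    (hφm_neg : ∀ l : ℝ, 0 < l → φm l < 0)
    (hφp_mono : MonotoneOn φp (Set.Ioi 0))
    (hφm_anti : AntitoneOn φm (Set.Ioi 0))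
    (γ : ℝ → ℝ)
    (hγ : ∀ l : ℝ, 0 < l → γ l = (1/2) * ∫ m in (0:ℝ)..l, (1 / φp m - 1 / φm m))
    (hγ0 : Tendsto γ (nhdsWithin 0 (Set.Ioi 0)) (nhds 0))
    (hγtop : Tendsto γ atTop atTop)
    (Ap Am : ℝ → ℝ)
    (hAp0 : Ap 0 = F' 0 + ∫ m in Set.Ioi (0:ℝ), Real.exp (-γ m) ∂F'.measure)
    (hAm0 : Am 0 = -(F' 0) - ∫ m in Set.Ioi (0:ℝ), Real.exp (-γ m) ∂F'.measure)
    (hAp : ∀ l : ℝ, 0 ≤ l → Ap l = Ap 0 + ∫ z in (0:ℝ)..l,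
        (Real.exp (γ z) / φp z) * (∫ m in Set.Ioi z, Real.exp (-γ m) ∂F'.measure))
    (hAm : ∀ l : ℝ, 0 ≤ l → Am l = Am 0 + ∫ z in (0:ℝ)..l,
        (Real.exp (γ z) / φm z) * (∫ m in Set.Ioi z, Real.exp (-γ m) ∂F'.measure)) :
    ∀ l : ℝ, 0 ≤ l → |Ap l| ≤ 3 * M ∧ |Am l| ≤ 3 * M :=
  stmt2_general F' M hM φp φm hφp_pos hφm_neg hφp_mono hφm_anti γ hγ hγtop Ap Am hAp0 hAm0 hAp hAm
end

section
/- Let R₁(x) := ∫_x^∞ e^{-z²/2} dz denote the (unnormalized) Gaussian tail. Then for all x > 0 and 0 < y < x, the map t ↦ R₁(t y)/R₁(t x) is strictly increasing on (0,∞). -/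
/-!
Write `R(a) = ∫_a^∞ e^{-z²/2} dz`. The derivative of `t ↦ R(ty)/R(tx)` has the sign of
`x e^{-(tx)²/2} R(ty) - y e^{-(ty)²/2} R(tx)`. Substituting `z = w/x`, resp. `z = w/y`, turns both
products into integrals over the same half-line `(txy, ∞)`, of `e^{-((w/x)² + (tx)²)/2}` and
`e^{-((w/y)² + (ty)²)/2}`; for `w > txy` the first exponent is the smaller one, since the difference
of the two is `(x² - y²)(w² - (txy)²)/(x²y²)`.
-/

open MeasureTheory Set Real

lemma setIntegral_pos_of_forall_pos {X : Type*} [MeasurableSpace X] {μ : Measure X}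
    {s : Set X} {f : X → ℝ} (hs : MeasurableSet s) (hμs : μ s ≠ 0) (hf : IntegrableOn f s μ)
    (hpos : ∀ x ∈ s, 0 < f x) : 0 < ∫ x in s, f x ∂μ := by
  have hsupp : Function.support f ∩ s = s := inter_eq_right.2 fun x hx => (hpos x hx).ne'
  rw [setIntegral_pos_iff_support_of_nonneg_ae ((ae_restrict_iff' hs).2 <|
    .of_forall fun x hx => (hpos x hx).le) hf, hsupp]
  exact pos_iff_ne_zero.2 hμs

lemma hasDerivAt_integral_Ici {f : ℝ → ℝ} (hf : Continuous f) (hfi : Integrable f) (a : ℝ) :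
    HasDerivAt (fun u => ∫ z in Ici u, f z) (-f a) a := by
  have hsplit : (fun u => ∫ z in Ici u, f z) = fun u => (∫ z in Ici 0, f z) - ∫ z in 0..u, f z := by
    ext u
    rw [← intervalIntegral.integral_Ici_sub_Ici' hfi.integrableOn hfi.integrableOn, sub_sub_cancel]
  rw [hsplit]
  exact ((hf.integral_hasStrictDerivAt 0 a).hasDerivAt).const_sub _

lemma strictMonoOn_div_of_hasDerivAt {f g f' g' : ℝ → ℝ} {D : Set ℝ} (hD : Convex ℝ D)
    (hf : ∀ t ∈ D, HasDerivAt f (f' t) t) (hg : ∀ t ∈ D, HasDerivAt g (g' t) t)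
    (hg0 : ∀ t ∈ D, g t ≠ 0) (hfg : ∀ t ∈ interior D, f t * g' t < f' t * g t) :
    StrictMonoOn (fun t => f t / g t) D := by
  have hdiv (t) (ht : t ∈ D) : HasDerivAt (fun t => f t / g t) _ t :=
    (hf t ht).div (hg t ht) (hg0 t ht)
  refine strictMonoOn_of_deriv_pos hD (fun t ht => (hdiv t ht).continuousAt.continuousWithinAt)
    fun t ht => ?_
  have htD := interior_subset ht
  rw [(hdiv t htD).deriv]
  exact div_pos (sub_pos.2 (hfg t ht)) (by have := hg0 t htD; positivity)

noncomputable def gaussTail (a : ℝ) : ℝ := ∫ z in Ici a, exp (-z ^ 2 / 2)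

lemma integrable_exp_neg_sq_div_two : Integrable fun z : ℝ => exp (-z ^ 2 / 2) := by
  convert integrable_exp_neg_mul_sq (b := 2⁻¹) (by norm_num) using 3
  ring

lemma gaussTail_pos (a : ℝ) : 0 < gaussTail a :=
  setIntegral_pos_of_forall_pos measurableSet_Ici (by simp)
    integrable_exp_neg_sq_div_two.integrableOn fun z _ => exp_pos _

lemma hasDerivAt_gaussTail (a : ℝ) : HasDerivAt gaussTail (-exp (-a ^ 2 / 2)) a :=
  hasDerivAt_integral_Ici (by fun_prop) integrable_exp_neg_sq_div_two a

lemma integrable_exp_neg_sq_div_add_sq {a : ℝ} (ha : a ≠ 0) (t : ℝ) :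
    Integrable fun w : ℝ => exp (-((w / a) ^ 2 + (t * a) ^ 2) / 2) := by
  convert (integrable_exp_neg_sq_div_two.comp_div ha).const_mul (exp (-(t * a) ^ 2 / 2)) using 2
  rw [← exp_add]
  ring_nf

lemma mul_exp_mul_gaussTail {a : ℝ} (ha : 0 < a) (b t : ℝ) :
    a * exp (-(t * a) ^ 2 / 2) * gaussTail (t * b) =
      ∫ w in Ioi (t * a * b), exp (-((w / a) ^ 2 + (t * a) ^ 2) / 2) := by
  have hsplit (w : ℝ) : exp (-((w / a) ^ 2 + (t * a) ^ 2) / 2) =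
      exp (-(t * a) ^ 2 / 2) * exp (-(w * a⁻¹) ^ 2 / 2) := by
    rw [← exp_add]
    ring_nf
  have hscale := integral_comp_mul_right_Ioi (fun z => exp (-z ^ 2 / 2)) (t * a * b) (inv_pos.2 ha)
  rw [show t * a * b * a⁻¹ = t * b by field_simp, inv_inv, smul_eq_mul] at hscale
  simp_rw [hsplit, integral_const_mul, hscale, gaussTail, integral_Ici_eq_integral_Ioi]
  ring

lemma sq_div_add_sq_lt {x y t w : ℝ} (hy : 0 < y) (hyx : y < x) (ht : 0 ≤ t)
    (hw : t * x * y < w) : (w / x) ^ 2 + (t * x) ^ 2 < (w / y) ^ 2 + (t * y) ^ 2 := by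
  have hx := hy.trans hyx
  have hdiff : (w / y) ^ 2 + (t * y) ^ 2 - ((w / x) ^ 2 + (t * x) ^ 2) =
      (x ^ 2 - y ^ 2) * (w ^ 2 - (t * x * y) ^ 2) / (x ^ 2 * y ^ 2) := by
    field_simp
    ring
  have hxy : 0 < x ^ 2 - y ^ 2 := by nlinarith
  have hwxy : 0 < w ^ 2 - (t * x * y) ^ 2 := by nlinarith [mul_nonneg (mul_nonneg ht hx.le) hy.le]
  have : 0 < (x ^ 2 - y ^ 2) * (w ^ 2 - (t * x * y) ^ 2) / (x ^ 2 * y ^ 2) := by positivity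
  linarith

lemma mul_exp_mul_gaussTail_lt {x y t : ℝ} (hy : 0 < y) (hyx : y < x) (ht : 0 ≤ t) :
    y * exp (-(t * y) ^ 2 / 2) * gaussTail (t * x) <
      x * exp (-(t * x) ^ 2 / 2) * gaussTail (t * y) := by
  have hx := hy.trans hyx
  rw [mul_exp_mul_gaussTail hy, mul_exp_mul_gaussTail hx, mul_right_comm t y x, ← sub_pos,
    ← integral_sub (integrable_exp_neg_sq_div_add_sq hx.ne' t).integrableOn
      (integrable_exp_neg_sq_div_add_sq hy.ne' t).integrableOn]
  refine setIntegral_pos_of_forall_pos measurableSet_Ioi (by simp)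
    (((integrable_exp_neg_sq_div_add_sq hx.ne' t).sub
      (integrable_exp_neg_sq_div_add_sq hy.ne' t)).integrableOn) fun w hw => ?_
  have := sq_div_add_sq_lt hy hyx ht hw
  exact sub_pos.2 (exp_lt_exp.2 (by linarith))

/-- For `0 < y < x`, the ratio of Gaussian tails `t ↦ R₁(ty)/R₁(tx)` is
strictly increasing on `(0,∞)`, where `R₁(x) = ∫_x^∞ e^{-z²/2} dz`. -/
theorem stmt9 (x y : ℝ) (hy : 0 < y) (hyx : y < x) :
    StrictMonoOn
      (fun t : ℝ =>
        (∫ z in Set.Ici (t * y), Real.exp (-z ^ 2 / 2)) /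
          (∫ z in Set.Ici (t * x), Real.exp (-z ^ 2 / 2)))
      (Set.Ioi 0) := by
  have hderiv (c t : ℝ) :
      HasDerivAt (fun t => gaussTail (t * c)) (-exp (-(t * c) ^ 2 / 2) * c) t :=
    (hasDerivAt_gaussTail (t * c)).comp (h := fun t => t * c) t (hasDerivAt_mul_const c)
  show StrictMonoOn (fun t => gaussTail (t * y) / gaussTail (t * x)) (Ioi 0)
  refine strictMonoOn_div_of_hasDerivAt (convex_Ioi 0) (fun t _ => hderiv y t)
    (fun t _ => hderiv x t) (fun t _ => (gaussTail_pos _).ne') fun t ht => ?_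
  rw [interior_Ioi] at ht
  linear_combination mul_exp_mul_gaussTail_lt hy hyx ht.le
end
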